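/- arXiv:1002.3816 — 3 statements merged into one kernel-verified Lean document; each statement's English description precedes it below -/
import Mathlib

section
/- Let (X, #) be a commutative hypergroup with zero element 0. Then 0 # a = {a} for every a ∈ X. -/
universe u

/-- A hypergroup `(X, #)`: `#` maps pairs to nonempty subsets, is associative
(on subsets, extending `#` by unions), has a zero element `zero` such that every
`a` has a unique additive inverse `neg a` (i.e. `0 ∈ a # (−a)` and `0 ∈ (−a) # a`),
and is reversible: `a ∈ b # c → b ∈ a # (−c)`. -/
structure Hypergroup (X : Type u) where
  hop : X → X → Set X
  nonempty : ∀ x y, (hop x y).Nonempty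
  assoc : ∀ x y z, (⋃ t ∈ hop y z, hop x t) = ⋃ t ∈ hop x y, hop t z
  zero : X
  neg : X → X
  neg_spec : ∀ a, zero ∈ hop a (neg a) ∧ zero ∈ hop (neg a) a
  neg_unique : ∀ a b, zero ∈ hop a b → zero ∈ hop b a → b = neg a
  reversible : ∀ a b c, a ∈ hop b c → b ∈ hop a (neg c)

/-- A commutative hypergroup. -/
structure CommHypergroup (X : Type u) extends Hypergroup X where
  comm : ∀ x y, hop x y = hop y x

/-- In a commutative hypergroup, `0 # a = {a}` for every `a`. -/
theorem CommHypergroup.zero_hop {X : Type u} (G : CommHypergroup X) (a : X) :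
    G.hop G.zero a = {a} := by
  have hnn : ∀ b, G.neg (G.neg b) = b := fun b =>
    (G.neg_unique (G.neg b) b (G.neg_spec b).2 (G.neg_spec b).1).symm
  ext x
  simp only [Set.mem_singleton_iff]
  constructor
  · intro hx
    have h1 := G.reversible x G.zero a hx
    have h2 : G.zero ∈ G.hop (G.neg a) x := by rw [G.comm] at h1; exact h1
    have := G.neg_unique (G.neg a) x h2 (by rw [G.comm] at h2; exact h2)
    rw [hnn] at this
    exact this
  · intro hx
    subst hx
    have := G.reversible G.zero x (G.neg x) (G.neg_spec x).1
    rwa [hnn] at this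
end

section
/- Let W₁ and W₂ be two hypersubspaces of a hypervector space (V, #, ∗) over a hyperfield (F, ⊕, ·). Then W₁ # W₂ = ⋃ { α # β : α ∈ W₁, β ∈ W₂ } is a hypersubspace of V. -/
universe u v

/-- A hyperfield: `(F, ⊕, ·)` where `(F, ⊕)` is a commutative hypergroup with zero
element `zero` (each `a` having a unique additive inverse `neg a`, and satisfying
reversibility), and `·` is an associative commutative multiplication distributing
over `⊕` from both sides, with `a·0 = 0·a = 0`, an identity `one` and multiplicative
inverses for nonzero elements. -/
structure Hyperfield (F : Type u) where
  add : F → F → Set F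
  add_nonempty : ∀ a b, (add a b).Nonempty
  add_comm : ∀ a b, add a b = add b a
  add_assoc : ∀ a b c, (⋃ t ∈ add b c, add a t) = ⋃ t ∈ add a b, add t c
  zero : F
  neg : F → F
  neg_spec : ∀ a, zero ∈ add a (neg a) ∧ zero ∈ add (neg a) a
  neg_unique : ∀ a b, zero ∈ add a b → zero ∈ add b a → b = neg a
  reversible : ∀ a b c, a ∈ add b c → b ∈ add a (neg c)
  mul : F → F → F
  mul_assoc : ∀ a b c, mul (mul a b) c = mul a (mul b c)
  left_distrib : ∀ a b c, (mul a) '' (add b c) = add (mul a b) (mul a c)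
  right_distrib : ∀ a b c, (fun t => mul t a) '' (add b c) = add (mul b a) (mul c a)
  mul_zero : ∀ a, mul a zero = zero
  zero_mul : ∀ a, mul zero a = zero
  one : F
  mul_one : ∀ a, mul a one = a
  one_ne_zero : one ≠ zero
  mul_comm : ∀ a b, mul a b = mul b a
  exists_inv : ∀ a, a ≠ zero → ∃ b, mul a b = one

/-- A hypervector space `(V, #, ∗)` over a hyperfield `K` on `F`:
`(V, #)` is a commutative hypergroup with zero vector `vzero`, and
`∗ : F × V → P*(V)` satisfies (i) `a ∗ (α # β) ⊆ a∗α # a∗β`,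
(ii) `(a ⊕ b) ∗ α ⊆ a∗α # b∗α`, (iii) `(a·b) ∗ α = a ∗ (b ∗ α)`,
(iv) `1 ∗ α = {α}` and `0 ∗ α = {θ}`. -/
structure HypervectorSpace (F : Type u) (V : Type v) (K : Hyperfield F) where
  vadd : V → V → Set V
  vadd_nonempty : ∀ x y, (vadd x y).Nonempty
  vadd_comm : ∀ x y, vadd x y = vadd y x
  vadd_assoc : ∀ x y z, (⋃ t ∈ vadd y z, vadd x t) = ⋃ t ∈ vadd x y, vadd t z
  vzero : V
  vneg : V → V
  vneg_spec : ∀ x, vzero ∈ vadd x (vneg x) ∧ vzero ∈ vadd (vneg x) x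
  vneg_unique : ∀ x y, vzero ∈ vadd x y → vzero ∈ vadd y x → y = vneg x
  vreversible : ∀ x y z, x ∈ vadd y z → y ∈ vadd x (vneg z)
  smul : F → V → Set V
  smul_nonempty : ∀ a x, (smul a x).Nonempty
  smul_vadd : ∀ a x y, (⋃ t ∈ vadd x y, smul a t) ⊆ ⋃ u ∈ smul a x, ⋃ w ∈ smul a y, vadd u w
  add_smul : ∀ a b x, (⋃ t ∈ K.add a b, smul t x) ⊆ ⋃ u ∈ smul a x, ⋃ w ∈ smul b x, vadd u w
  mul_smul : ∀ a b x, smul (K.mul a b) x = ⋃ t ∈ smul b x, smul a t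
  one_smul : ∀ x, smul K.one x = {x}
  zero_smul : ∀ x, smul K.zero x = {vzero}

namespace HypervectorSpace

variable {F : Type u} {V : Type v} {K : Hyperfield F}

/-- The hyperoperation `#` extended to subsets: `A # B = ⋃_{a ∈ A, b ∈ B} a # b`. -/
def setVadd (H : HypervectorSpace F V K) (A B : Set V) : Set V :=
  ⋃ a ∈ A, ⋃ b ∈ B, H.vadd a b

/-- A subset `W` of a hypervector space is a hypersubspace if it is closed under `#`
and `∗`, contains the zero vector, and contains additive inverses. -/
def IsHypersubspace (H : HypervectorSpace F V K) (W : Set V) : Prop :=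
  (∀ α ∈ W, ∀ β ∈ W, H.vadd α β ⊆ W) ∧
  (∀ a : F, ∀ α ∈ W, H.smul a α ⊆ W) ∧
  H.vzero ∈ W ∧
  (∀ α ∈ W, H.vneg α ∈ W)

/-- Iterated hyperoperation `A₁ # A₂ # ... # Aₙ` on a list of subsets
(by convention the empty hypersum is `{θ}`). -/
def hsum (H : HypervectorSpace F V K) : List (Set V) → Set V
  | [] => {H.vzero}
  | [A] => A
  | A :: B :: rest => H.setVadd A (HypervectorSpace.hsum H (B :: rest))

/-- The linear combination set `a₁∗α₁ # a₂∗α₂ # ... # aₙ∗αₙ`. -/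
def lincomb (H : HypervectorSpace F V K) {n : ℕ} (a : Fin n → F) (α : Fin n → V) : Set V :=
  H.hsum (List.ofFn fun i => H.smul (a i) (α i))

/-- The hyperlinear span `HL(α₁, ..., αₙ) = ⋃ { a₁∗α₁ # ... # aₙ∗αₙ : a₁, ..., aₙ ∈ F }`. -/
def HL (H : HypervectorSpace F V K) {n : ℕ} (α : Fin n → V) : Set V :=
  ⋃ a : Fin n → F, H.lincomb a α

/-- The family `α₁, ..., αₙ` is linearly dependent if `θ ∈ a₁∗α₁ # ... # aₙ∗αₙ`
for some scalars `a₁, ..., aₙ`, not all zero. -/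
def LinDep (H : HypervectorSpace F V K) {n : ℕ} (α : Fin n → V) : Prop :=
  ∃ a : Fin n → F, (∃ i, a i ≠ K.zero) ∧ H.vzero ∈ H.lincomb a α

/-- Strongly left distributive: equality `(a ⊕ b) ∗ α = a∗α # b∗α`. -/
def StronglyLeftDistrib (H : HypervectorSpace F V K) : Prop :=
  ∀ (a b : F) (x : V),
    (⋃ t ∈ K.add a b, H.smul t x) = ⋃ u ∈ H.smul a x, ⋃ w ∈ H.smul b x, H.vadd u w

/-- The set of all finite linear combinations of elements of `S`. -/
def HLSet (H : HypervectorSpace F V K) (S : Set V) : Set V :=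
  ⋃ n : ℕ, ⋃ β : Fin n → V, ⋃ (_ : ∀ i, β i ∈ S), H.HL β

/-- A set `S` is linearly independent if every finite family of distinct elements
of `S` is linearly independent. -/
def LinIndepSet (H : HypervectorSpace F V K) (S : Set V) : Prop :=
  ∀ (n : ℕ) (β : Fin n → V), Function.Injective β → (∀ i, β i ∈ S) → ¬ H.LinDep β

/-- `S` is a basis of the hypersubspace `U`: `S ⊆ U`, `S` is linearly independent,
and every element of `U` is a finite linear combination of elements of `S`. -/
def IsBasisOf (H : HypervectorSpace F V K) (S U : Set V) : Prop :=
  S ⊆ U ∧ H.LinIndepSet S ∧ U ⊆ H.HLSet S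

end HypervectorSpace

/-- If `W₁` and `W₂` are hypersubspaces of `V`, then
`W₁ # W₂ = ⋃ { α # β : α ∈ W₁, β ∈ W₂ }` is a hypersubspace of `V`. -/
theorem HypervectorSpace.setVadd_isHypersubspace {F : Type u} {V : Type v}
    {K : Hyperfield F} (H : HypervectorSpace F V K) (W₁ W₂ : Set V)
    (h₁ : H.IsHypersubspace W₁) (h₂ : H.IsHypersubspace W₂) :
    H.IsHypersubspace (H.setVadd W₁ W₂) := by
  obtain ⟨add₁, smul₁, zero₁, neg₁⟩ := h₁
  obtain ⟨add₂, smul₂, zero₂, neg₂⟩ := h₂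
  have memS : ∀ {z : V}, ∀ a ∈ W₁, ∀ b ∈ W₂, z ∈ H.vadd a b → z ∈ H.setVadd W₁ W₂ := by
    intro z a ha b hb hz
    exact Set.mem_iUnion₂.2 ⟨a, ha, Set.mem_iUnion₂.2 ⟨b, hb, hz⟩⟩
  have memS' : ∀ {z : V}, z ∈ H.setVadd W₁ W₂ →
      ∃ a ∈ W₁, ∃ b ∈ W₂, z ∈ H.vadd a b := by
    intro z hz
    obtain ⟨a, ha, hz⟩ := Set.mem_iUnion₂.1 hz
    obtain ⟨b, hb, hz⟩ := Set.mem_iUnion₂.1 hz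
    exact ⟨a, ha, b, hb, hz⟩
  -- reassociation helper: z ∈ x # t for some t ∈ y # w  ↔  z ∈ s # w for some s ∈ x # y
  have reassoc : ∀ {z x y w : V} {t : V}, t ∈ H.vadd y w → z ∈ H.vadd x t →
      ∃ s ∈ H.vadd x y, z ∈ H.vadd s w := by
    intro z x y w t ht hz
    have : z ∈ ⋃ t ∈ H.vadd y w, H.vadd x t := Set.mem_iUnion₂.2 ⟨t, ht, hz⟩
    rw [H.vadd_assoc] at this
    obtain ⟨s, hs, hzs⟩ := Set.mem_iUnion₂.1 this
    exact ⟨s, hs, hzs⟩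
  have reassoc' : ∀ {z x y w : V} {t : V}, t ∈ H.vadd x y → z ∈ H.vadd t w →
      ∃ s ∈ H.vadd y w, z ∈ H.vadd x s := by
    intro z x y w t ht hz
    have : z ∈ ⋃ t ∈ H.vadd x y, H.vadd t w := Set.mem_iUnion₂.2 ⟨t, ht, hz⟩
    rw [← H.vadd_assoc] at this
    obtain ⟨s, hs, hzs⟩ := Set.mem_iUnion₂.1 this
    exact ⟨s, hs, hzs⟩
  refine ⟨?_, ?_, ?_, ?_⟩
  · -- closed under vadd
    intro α hα β hβ z hz
    obtain ⟨a, ha, b, hb, hab⟩ := memS' hα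
    obtain ⟨c, hc, d, hd, hcd⟩ := memS' hβ
    -- z ∈ α # β, α ∈ a # b : get z ∈ a # s, s ∈ b # β
    obtain ⟨s, hs, hzs⟩ := reassoc' hab hz
    -- s ∈ b # β, β ∈ c # d : get s ∈ u # d, u ∈ b # c
    obtain ⟨u, hu, hsu⟩ := (by
      obtain ⟨u, hu, h'⟩ := reassoc hcd hs
      exact ⟨u, hu, h'⟩ : ∃ u ∈ H.vadd b c, s ∈ H.vadd u d)
    -- u ∈ c # b (comm), so s ∈ u # d with u ∈ c # b : get s ∈ c # w, w ∈ b # d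
    rw [H.vadd_comm] at hu
    obtain ⟨w, hw, hsw⟩ := reassoc' hu hsu
    -- z ∈ a # s, s ∈ c # w : get z ∈ v # w, v ∈ a # c
    obtain ⟨v, hv, hzv⟩ := reassoc hsw hzs
    exact memS v (add₁ a ha c hc hv) w (add₂ b hb d hd hw) hzv
  · -- closed under smul
    intro r α hα z hz
    obtain ⟨a, ha, b, hb, hab⟩ := memS' hα
    have : z ∈ ⋃ t ∈ H.vadd a b, H.smul r t := Set.mem_iUnion₂.2 ⟨α, hab, hz⟩
    have := H.smul_vadd r a b this
    obtain ⟨u, hu, h'⟩ := Set.mem_iUnion₂.1 this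
    obtain ⟨w, hw, h''⟩ := Set.mem_iUnion₂.1 h'
    exact memS u (smul₁ r a ha hu) w (smul₂ r b hb hw) h''
  · -- contains zero
    exact memS H.vzero zero₁ (H.vneg H.vzero) (neg₂ H.vzero zero₂)
      (H.vneg_spec H.vzero).1
  · -- closed under neg
    intro α hα
    obtain ⟨a, ha, b, hb, hab⟩ := memS' hα
    -- show vneg α ∈ vadd (vneg a) (vneg b)
    have hbb : b = H.vneg (H.vneg b) :=
      H.vneg_unique (H.vneg b) b (H.vneg_spec b).2 (H.vneg_spec b).1
    have h1 : a ∈ H.vadd α (H.vneg b) := H.vreversible α a b hab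
    rw [H.vadd_comm] at h1
    have h2 : H.vneg b ∈ H.vadd a (H.vneg α) := H.vreversible a (H.vneg b) α h1
    rw [H.vadd_comm] at h2
    have h3 : H.vneg α ∈ H.vadd (H.vneg b) (H.vneg a) :=
      H.vreversible (H.vneg b) (H.vneg α) a h2
    rw [H.vadd_comm] at h3
    exact memS (H.vneg a) (neg₁ a ha) (H.vneg b) (neg₂ b hb) h3
end

section
/- Let (V, #, ∗) be a strongly left distributive hypervector space over a hyperfield (F, ⊕, ·) and let α₁, α₂, ..., αₙ ∈ V. Then the hyperlinear span W = HL(α₁, ..., αₙ) = ⋃ { a₁∗α₁ # a₂∗α₂ # ... # aₙ∗αₙ : a₁, ..., aₙ ∈ F } is a hypersubspace of V; moreover it is the smallest hypersubspace of V containing α₁, ..., αₙ: each αᵢ ∈ W, and every hypersubspace P of V containing α₁, ..., αₙ satisfies W ⊆ P. -/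
universe u v

namespace Hyperfield

variable {F : Type u}

lemma neg_one_mul' (K : Hyperfield F) (a : F) : K.mul (K.neg K.one) a = K.neg a := by
  have h := K.right_distrib a K.one (K.neg K.one)
  have h0 : K.zero ∈ K.add K.one (K.neg K.one) := (K.neg_spec K.one).1
  have h1 : K.zero ∈ K.add (K.mul K.one a) (K.mul (K.neg K.one) a) := by
    rw [← h]; exact ⟨K.zero, h0, K.zero_mul a⟩
  have hone : K.mul K.one a = a := by rw [K.mul_comm, K.mul_one]
  rw [hone] at h1
  have h2 : K.zero ∈ K.add (K.mul (K.neg K.one) a) a := by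
    rw [K.add_comm]; exact h1
  exact K.neg_unique a _ h1 h2

end Hyperfield

namespace HypervectorSpace

variable {F : Type u} {V : Type v} {K : Hyperfield F}

lemma mem_setVadd (H : HypervectorSpace F V K) {A B : Set V} {v : V} :
    v ∈ H.setVadd A B ↔ ∃ a ∈ A, ∃ b ∈ B, v ∈ H.vadd a b := by
  simp [setVadd]

lemma vneg_vneg (H : HypervectorSpace F V K) (x : V) : H.vneg (H.vneg x) = x :=
  (H.vneg_unique (H.vneg x) x (H.vneg_spec x).2 (H.vneg_spec x).1).symm

lemma zero_vadd (H : HypervectorSpace F V K) (x : V) : H.vadd H.vzero x = {x} := by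
  ext y
  constructor
  · intro hy
    have h1 : H.vzero ∈ H.vadd y (H.vneg x) := H.vreversible y H.vzero x hy
    have h2 : H.vzero ∈ H.vadd (H.vneg x) y := by
      rw [H.vadd_comm]; exact h1
    have h3 := H.vneg_unique y (H.vneg x) h1 h2
    have h4 := congrArg H.vneg h3
    rw [H.vneg_vneg] at h4
    simp only [Set.mem_singleton_iff]
    rw [h4, H.vneg_vneg]
  · intro hy
    simp only [Set.mem_singleton_iff] at hy
    subst hy
    have := H.vreversible H.vzero y (H.vneg y) (H.vneg_spec y).1
    rwa [H.vneg_vneg] at this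

lemma vadd_zero (H : HypervectorSpace F V K) (x : V) : H.vadd x H.vzero = {x} := by
  rw [H.vadd_comm, H.zero_vadd]

lemma smul_vzero (H : HypervectorSpace F V K) (a : F) :
    H.smul a H.vzero = {H.vzero} := by
  have h := H.mul_smul a K.zero H.vzero
  rw [K.mul_zero, H.zero_smul] at h
  simpa using h.symm

lemma setVadd_comm (H : HypervectorSpace F V K) (A B : Set V) :
    H.setVadd A B = H.setVadd B A := by
  ext v
  simp only [H.mem_setVadd]
  constructor
  · rintro ⟨a, ha, b, hb, hv⟩
    exact ⟨b, hb, a, ha, by rw [H.vadd_comm]; exact hv⟩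
  · rintro ⟨b, hb, a, ha, hv⟩
    exact ⟨a, ha, b, hb, by rw [H.vadd_comm]; exact hv⟩

lemma setVadd_assoc (H : HypervectorSpace F V K) (A B C : Set V) :
    H.setVadd (H.setVadd A B) C = H.setVadd A (H.setVadd B C) := by
  ext v
  simp only [H.mem_setVadd]
  constructor
  · rintro ⟨t, ⟨a, ha, b, hb, ht⟩, c, hc, hv⟩
    have hv' : v ∈ ⋃ t ∈ H.vadd a b, H.vadd t c := Set.mem_biUnion ht hv
    rw [← H.vadd_assoc a b c] at hv'
    obtain ⟨s, hs, hv''⟩ := Set.mem_iUnion₂.1 hv'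
    exact ⟨a, ha, s, ⟨b, hb, c, hc, hs⟩, hv''⟩
  · rintro ⟨a, ha, t, ⟨b, hb, c, hc, ht⟩, hv⟩
    have hv' : v ∈ ⋃ t ∈ H.vadd b c, H.vadd a t := Set.mem_biUnion ht hv
    rw [H.vadd_assoc a b c] at hv'
    obtain ⟨s, hs, hv''⟩ := Set.mem_iUnion₂.1 hv'
    exact ⟨s, ⟨a, ha, b, hb, hs⟩, c, hc, hv''⟩

lemma setVadd_singleton (H : HypervectorSpace F V K) (a b : V) :
    H.setVadd {a} {b} = H.vadd a b := by
  simp [setVadd]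

lemma vadd_subset_setVadd (H : HypervectorSpace F V K) {A B : Set V} {a b : V}
    (ha : a ∈ A) (hb : b ∈ B) : H.vadd a b ⊆ H.setVadd A B := by
  intro v hv
  exact (H.mem_setVadd).2 ⟨a, ha, b, hb, hv⟩

lemma setVadd_exchange (H : HypervectorSpace F V K) (A B C D : Set V) :
    H.setVadd (H.setVadd A B) (H.setVadd C D) =
      H.setVadd (H.setVadd A C) (H.setVadd B D) := by
  rw [H.setVadd_assoc A B (H.setVadd C D), ← H.setVadd_assoc B C D,
    H.setVadd_comm B C, H.setVadd_assoc C B D, ← H.setVadd_assoc A C (H.setVadd B D)]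

lemma hsum_cons (H : HypervectorSpace F V K) (A : Set V) (L : List (Set V)) :
    H.hsum (A :: L) = H.setVadd A (H.hsum L) := by
  cases L with
  | nil =>
    show A = H.setVadd A {H.vzero}
    ext v
    simp [setVadd, H.vadd_zero]
  | cons B rest => rfl

lemma lincomb_succ (H : HypervectorSpace F V K) {n : ℕ} (a : Fin (n + 1) → F)
    (α : Fin (n + 1) → V) :
    H.lincomb a α = H.setVadd (H.smul (a 0) (α 0))
      (H.lincomb (a ∘ Fin.succ) (α ∘ Fin.succ)) := by
  unfold lincomb
  rw [List.ofFn_succ, H.hsum_cons]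
  rfl

lemma HL_succ (H : HypervectorSpace F V K) {n : ℕ} (α : Fin (n + 1) → V) :
    H.HL α = ⋃ c : F, H.setVadd (H.smul c (α 0)) (H.HL (α ∘ Fin.succ)) := by
  ext v
  simp only [HL, Set.mem_iUnion]
  constructor
  · rintro ⟨a, hv⟩
    rw [H.lincomb_succ] at hv
    obtain ⟨p, hp, w, hw, hv'⟩ := (H.mem_setVadd).1 hv
    exact ⟨a 0, (H.mem_setVadd).2 ⟨p, hp, w, Set.mem_iUnion.2 ⟨a ∘ Fin.succ, hw⟩, hv'⟩⟩
  · rintro ⟨c, hv⟩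
    obtain ⟨p, hp, w, hw, hv'⟩ := (H.mem_setVadd).1 hv
    obtain ⟨b, hb⟩ := Set.mem_iUnion.1 hw
    refine ⟨Fin.cons c b, ?_⟩
    rw [H.lincomb_succ]
    have h0 : (Fin.cons c b : Fin (n + 1) → F) 0 = c := rfl
    have hsucc : (Fin.cons c b : Fin (n + 1) → F) ∘ Fin.succ = b := by
      funext j; simp
    rw [h0, hsucc]
    exact (H.mem_setVadd).2 ⟨p, hp, w, hb, hv'⟩

lemma HL_zero (H : HypervectorSpace F V K) (α : Fin 0 → V) :
    H.HL α = {H.vzero} := by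
  ext v
  simp only [HL, lincomb, List.ofFn_zero, hsum, Set.mem_iUnion]
  exact ⟨fun ⟨_, h⟩ => h, fun h => ⟨fun i => i.elim0, h⟩⟩

lemma neg_mem_smul_neg_one (H : HypervectorSpace F V K)
    (hsld : H.StronglyLeftDistrib) (p : V) :
    H.vneg p ∈ H.smul (K.neg K.one) p := by
  have h := hsld K.one (K.neg K.one) p
  have hθ : H.vzero ∈ ⋃ t ∈ K.add K.one (K.neg K.one), H.smul t p := by
    refine Set.mem_biUnion (K.neg_spec K.one).1 ?_
    rw [H.zero_smul]; rfl
  rw [h] at hθ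
  rw [H.one_smul, Set.biUnion_singleton] at hθ
  obtain ⟨w, hw, hθ'⟩ := Set.mem_iUnion₂.1 hθ
  have hθ2 : H.vzero ∈ H.vadd w p := by rw [H.vadd_comm]; exact hθ'
  have := H.vneg_unique p w hθ' hθ2
  rw [← this]; exact hw

lemma neg_mem_smul (H : HypervectorSpace F V K) (hsld : H.StronglyLeftDistrib)
    {c : F} {x p : V} (hp : p ∈ H.smul c x) :
    H.vneg p ∈ H.smul (K.neg c) x := by
  have hc : K.neg c = K.mul (K.neg K.one) c := (K.neg_one_mul' c).symm
  rw [hc, H.mul_smul]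
  exact Set.mem_biUnion hp (H.neg_mem_smul_neg_one hsld p)

lemma neg_mem_vadd (H : HypervectorSpace F V K) {u p w : V}
    (hu : u ∈ H.vadd p w) : H.vneg u ∈ H.vadd (H.vneg p) (H.vneg w) := by
  have h1 : p ∈ H.vadd u (H.vneg w) := H.vreversible u p w hu
  have h2 : p ∈ H.vadd (H.vneg w) u := by rw [H.vadd_comm]; exact h1
  have h3 : H.vneg w ∈ H.vadd p (H.vneg u) := H.vreversible p (H.vneg w) u h2
  have h4 : H.vneg w ∈ H.vadd (H.vneg u) p := by rw [H.vadd_comm]; exact h3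
  have h5 : H.vneg u ∈ H.vadd (H.vneg w) (H.vneg p) :=
    H.vreversible (H.vneg w) (H.vneg u) p h4
  rw [H.vadd_comm]; exact h5

end HypervectorSpace

/-- In a strongly left distributive hypervector space, the hyperlinear span
`HL(α₁, ..., αₙ)` is a hypersubspace of `V`; moreover it is the smallest
hypersubspace containing `α₁, ..., αₙ`. -/
theorem HypervectorSpace.HL_isHypersubspace_smallest {F : Type u} {V : Type v}
    {K : Hyperfield F} (H : HypervectorSpace F V K)
    (hsld : H.StronglyLeftDistrib) {n : ℕ} (α : Fin n → V) :
    H.IsHypersubspace (H.HL α) ∧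
      (∀ i : Fin n, α i ∈ H.HL α) ∧
      ∀ P : Set V, H.IsHypersubspace P → (∀ i : Fin n, α i ∈ P) → H.HL α ⊆ P := by
  induction n with
  | zero =>
    rw [H.HL_zero]
    have hz : H.vzero ∈ H.vadd H.vzero H.vzero := by
      rw [H.zero_vadd]; rfl
    refine ⟨⟨?_, ?_, rfl, ?_⟩, fun i => i.elim0, ?_⟩
    · intro a ha b hb
      simp only [Set.mem_singleton_iff] at ha hb
      subst ha; subst hb
      exact (H.zero_vadd H.vzero).subset
    · intro a x hx
      simp only [Set.mem_singleton_iff] at hx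
      subst hx
      exact (H.smul_vzero a).subset
    · intro x hx
      simp only [Set.mem_singleton_iff] at hx ⊢
      subst hx
      exact (H.vneg_unique _ _ hz hz).symm
    · intro P hP _
      intro v hv
      simp only [Set.mem_singleton_iff] at hv
      subst hv
      exact hP.2.2.1
  | succ n IH =>
    obtain ⟨⟨IH1, IH2, IH3, IH4⟩, IHmem, IHsm⟩ := IH (α ∘ Fin.succ)
    have hW : ∀ v, v ∈ H.HL α ↔ ∃ c : F, ∃ p ∈ H.smul c (α 0),
        ∃ w ∈ H.HL (α ∘ Fin.succ), v ∈ H.vadd p w := by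
      intro v
      rw [H.HL_succ]
      simp only [Set.mem_iUnion, H.mem_setVadd]
    have hsub' : H.HL (α ∘ Fin.succ) ⊆ H.HL α := by
      intro w hw
      refine (hW w).2 ⟨K.zero, H.vzero, by rw [H.zero_smul]; rfl, w, hw, ?_⟩
      rw [H.zero_vadd]; rfl
    have hmem0 : α 0 ∈ H.HL α := by
      refine (hW (α 0)).2 ⟨K.one, α 0, by rw [H.one_smul]; rfl, H.vzero, IH3, ?_⟩
      rw [H.vadd_zero]; rfl
    refine ⟨⟨?_, ?_, hsub' IH3, ?_⟩, ?_, ?_⟩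
    · -- closed under vadd
      intro u hu v hv
      obtain ⟨c, p, hp, w1, hw1, hu'⟩ := (hW u).1 hu
      obtain ⟨d, q, hq, w2, hw2, hv'⟩ := (hW v).1 hv
      intro z hz
      have h1 : z ∈ H.setVadd (H.vadd p w1) (H.vadd q w2) :=
        H.vadd_subset_setVadd hu' hv' hz
      have h2 : H.setVadd (H.vadd p w1) (H.vadd q w2) =
          H.setVadd (H.vadd p q) (H.vadd w1 w2) := by
        rw [← H.setVadd_singleton p w1, ← H.setVadd_singleton q w2,
          ← H.setVadd_singleton p q, ← H.setVadd_singleton w1 w2,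
          H.setVadd_exchange]
      rw [h2] at h1
      obtain ⟨r, hr, s, hs, hz'⟩ := (H.mem_setVadd).1 h1
      have hr' : r ∈ ⋃ t ∈ K.add c d, H.smul t (α 0) := by
        rw [hsld c d (α 0)]
        exact Set.mem_biUnion hp (Set.mem_biUnion hq hr)
      obtain ⟨t, ht, hrt⟩ := Set.mem_iUnion₂.1 hr'
      have hsW : s ∈ H.HL (α ∘ Fin.succ) := IH1 w1 hw1 w2 hw2 hs
      exact (hW z).2 ⟨t, r, hrt, s, hsW, hz'⟩
    · -- closed under smul
      intro a u hu
      obtain ⟨c, p, hp, w, hw, hu'⟩ := (hW u).1 hu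
      intro z hz
      have h1 : z ∈ ⋃ t ∈ H.vadd p w, H.smul a t := Set.mem_biUnion hu' hz
      have h2 := H.smul_vadd a p w h1
      simp only [Set.mem_iUnion] at h2
      obtain ⟨u', hu'', r, hr, hz'⟩ := h2
      have hu3 : u' ∈ H.smul (K.mul a c) (α 0) := by
        rw [H.mul_smul]
        exact Set.mem_biUnion hp hu''
      have hrW : r ∈ H.HL (α ∘ Fin.succ) := IH2 a w hw hr
      exact (hW z).2 ⟨K.mul a c, u', hu3, r, hrW, hz'⟩
    · -- closed under vneg
      intro u hu
      obtain ⟨c, p, hp, w, hw, hu'⟩ := (hW u).1 hu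
      have h9 := H.neg_mem_vadd hu'
      exact (hW (H.vneg u)).2
        ⟨K.neg c, H.vneg p, H.neg_mem_smul hsld hp, H.vneg w, IH4 w hw, h9⟩
    · -- membership of the αᵢ
      intro i
      refine Fin.cases hmem0 (fun j => ?_) i
      exact hsub' (IHmem j)
    · -- smallest
      intro P hP hPα v hv
      obtain ⟨c, p, hp, w, hw, hv'⟩ := (hW v).1 hv
      have hw' : w ∈ P := IHsm P hP (fun j => hPα j.succ) hw
      have hp' : p ∈ P := hP.2.1 c (α 0) (hPα 0) hp
      exact hP.1 p hp' w hw' hv'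
end
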